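/- Let (R_k)_{k=0}^{K} with R_0 = 1, R_k > 0 for 1 ≤ k < k₀ and R_k = 0 for k₀ ≤ k ≤ K. Fix η > 0, τ ∈ (0,1), and define for c > 0 the function Ω_c(k) = (R_k^η + c)/(R_{k−1}^η + c). Then for all sufficiently small c > 0, the largest index k ∈ {1,…,K} with Ω_c(k) ≤ τ equals k₀. -/
import Mathlib


open Filter Topology

/-- For all sufficiently small ridge values `c > 0`, the largest index
`k ∈ {1,…,K}` with `Ω_c(k) = (R_k^η + c)/(R_{k-1}^η + c) ≤ τ` equals the true order `k₀`. -/
theorem signal_function_identifies_order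
    (K k₀ : ℕ) (hk₀ : 1 ≤ k₀) (hk₀K : k₀ ≤ K)
    (R : ℕ → ℝ) (hR0 : R 0 = 1)
    (hRnonneg : ∀ k, 0 ≤ R k)
    (hRpos : ∀ k, 1 ≤ k → k < k₀ → 0 < R k)
    (hRzero : ∀ k, k₀ ≤ k → k ≤ K → R k = 0)
    (η : ℝ) (hη : 0 < η) (τ : ℝ) (hτ0 : 0 < τ) (hτ1 : τ < 1) :
    ∃ c₀ > 0, ∀ c : ℝ, 0 < c → c < c₀ →
      sSup {k : ℕ | 1 ≤ k ∧ k ≤ K ∧ (R k ^ η + c) / (R (k - 1) ^ η + c) ≤ τ} = k₀ := by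
  have hRk₀1 : 0 < R (k₀ - 1) := by
    rcases Nat.eq_or_lt_of_le hk₀ with h | h
    · simp [← h, hR0]
    · exact hRpos _ (Nat.le_sub_one_of_lt h) (Nat.sub_lt (by omega) one_pos)
  set A : ℝ := R (k₀ - 1) ^ η with hA
  have hApos : 0 < A := Real.rpow_pos_of_pos hRk₀1 η
  refine ⟨τ * A / (1 - τ), div_pos (by positivity) (by linarith), fun c hc hcc => ?_⟩
  have hk₀mem : k₀ ∈ {k : ℕ | 1 ≤ k ∧ k ≤ K ∧ (R k ^ η + c) / (R (k - 1) ^ η + c) ≤ τ} := by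
    refine ⟨hk₀, hk₀K, ?_⟩
    rw [hRzero k₀ le_rfl hk₀K, Real.zero_rpow hη.ne', zero_add, div_le_iff₀ (by positivity)]
    have : c * (1 - τ) < τ * A := by
      rw [← lt_div_iff₀ (by linarith)] at *
      linarith [hcc]
    nlinarith
  have hub : ∀ k ∈ {k : ℕ | 1 ≤ k ∧ k ≤ K ∧ (R k ^ η + c) / (R (k - 1) ^ η + c) ≤ τ},
      k ≤ k₀ := by
    rintro k ⟨hk1, hkK, hkτ⟩
    by_contra h
    push_neg at h
    rw [hRzero k (by omega) hkK, hRzero (k - 1) (by omega) (by omega),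
      Real.zero_rpow hη.ne', zero_add, div_self hc.ne'] at hkτ
    linarith
  exact le_antisymm (csSup_le ⟨k₀, hk₀mem⟩ hub) (le_csSup ⟨k₀, hub⟩ hk₀mem)
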